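/- Let s ∈ ℂ and p > 0, and define Υ(μ) = |1 − μ s|² + |μ|² p. Then min over μ ∈ ℂ and ν > 0 of (νΥ(μ) − ln ν) equals 1 − ln(1 + |s|²/p). Consequently, maximizing −(νΥ(μ) − ln ν) over (μ, ν) recovers the rate term ln(1 + |s|²/p) up to an additive constant. -/

import Mathlib

/-!
Both variables can be minimised in closed form. For fixed `μ`, `log x ≤ x - 1` applied to
`x = ν Υ(μ)` gives `ν Υ(μ) - log ν ≥ 1 + log Υ(μ)`, with equality at `ν = 1 / Υ(μ)`.
Completing the square with `q = |s|² + p` gives `Υ(μ) = p / q + q |μ - s̄ / q|²`, so `Υ` is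
minimised at the MMSE receiver `μ = s̄ / q` with value `p / q = (1 + |s|² / p)⁻¹`.
-/

open Real ComplexConjugate

theorem isLeast_mul_sub_log {a : ℝ} (ha : 0 < a) :
    IsLeast {x : ℝ | ∃ ν : ℝ, 0 < ν ∧ x = ν * a - log ν} (1 + log a) := by
  constructor
  · refine ⟨a⁻¹, inv_pos.mpr ha, ?_⟩
    rw [inv_mul_cancel₀ ha.ne', log_inv]
    ring
  · rintro x ⟨ν, hν, rfl⟩
    have h := log_le_sub_one_of_pos (mul_pos hν ha)
    rw [log_mul hν.ne' ha.ne'] at h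
    linarith

theorem norm_one_sub_mul_sq_add_norm_sq_mul (s μ : ℂ) {p : ℝ} (hq : ‖s‖ ^ 2 + p ≠ 0) :
    ‖1 - μ * s‖ ^ 2 + ‖μ‖ ^ 2 * p =
      p / (‖s‖ ^ 2 + p) + (‖s‖ ^ 2 + p) * ‖μ - conj s / (‖s‖ ^ 2 + p : ℝ)‖ ^ 2 := by
  have hs : ‖s‖ ^ 2 = s.re ^ 2 + s.im ^ 2 := by
    rw [Complex.sq_norm, Complex.normSq_apply]; ring
  generalize hqdef : ‖s‖ ^ 2 + p = q at hq ⊢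
  simp only [Complex.sq_norm, Complex.normSq_apply, Complex.sub_re, Complex.sub_im,
    Complex.mul_re, Complex.mul_im, Complex.one_re, Complex.one_im, Complex.div_ofReal_re,
    Complex.div_ofReal_im, Complex.conj_re, Complex.conj_im]
  field_simp
  rw [← hqdef, hs]
  ring

/-- For `s ∈ ℂ`, `p > 0` and `Υ(μ) = |1 − μs|² + |μ|² p`, the minimum
of `νΥ(μ) − ln ν` over `μ ∈ ℂ` and `ν > 0` equals `1 − ln(1 + |s|²/p)`; i.e. the
WMMSE surrogate recovers the rate term `ln(1 + |s|²/p)` up to an additive constant. -/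
theorem stmt_6 (s : ℂ) (p : ℝ) (hp : 0 < p) :
    let Υ : ℂ → ℝ := fun μ =>
      (‖1 - μ * s‖) ^ 2 + (‖μ‖) ^ 2 * p
    IsLeast {x : ℝ | ∃ (μ : ℂ) (ν : ℝ), 0 < ν ∧ x = ν * Υ μ - Real.log ν}
      (1 - Real.log (1 + (‖s‖) ^ 2 / p)) := by
  intro Υ
  set q := ‖s‖ ^ 2 + p
  have hq : 0 < q := by positivity
  have hΥ (μ : ℂ) : Υ μ = p / q + q * ‖μ - conj s / (q : ℂ)‖ ^ 2 :=
    norm_one_sub_mul_sq_add_norm_sq_mul s μ hq.ne'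
  have hΥ_min : Υ (conj s / (q : ℂ)) = p / q := by simp [hΥ]
  have hΥ_ge (μ : ℂ) : p / q ≤ Υ μ := by
    rw [hΥ]
    exact le_add_of_nonneg_right (by positivity)
  have hvalue : 1 - log (1 + ‖s‖ ^ 2 / p) = 1 + log (p / q) := by
    rw [sub_eq_add_neg, ← log_inv, one_add_div hp.ne', inv_div, add_comm p]
  rw [hvalue]
  constructor
  · obtain ⟨ν, hν, hx⟩ := (isLeast_mul_sub_log (div_pos hp hq)).1
    exact ⟨conj s / (q : ℂ), ν, hν, hΥ_min ▸ hx⟩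
  · rintro x ⟨μ, ν, hν, rfl⟩
    calc 1 + log (p / q) ≤ 1 + log (Υ μ) := by gcongr; exact hΥ_ge μ
      _ ≤ ν * Υ μ - log ν :=
        (isLeast_mul_sub_log ((div_pos hp hq).trans_le (hΥ_ge μ))).2 ⟨ν, hν, rfl⟩
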